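/- Let A', A'' be a split of a list A into two disjoint complementary subsequences. If Λ_k(A) = L and Λ_s(A') = ℓ with s < k, then Λ_{k−s+1}(A'') ≥ L − ℓ. -/

import Mathlib

def LDS (a : List ℤ) : ℕ :=
  ((a.sublists.filter (fun l => decide (l.IsChain (· > ·)))).map List.length).foldr max 0

inductive Interleave : List ℤ → List ℤ → List ℤ → Prop
  | nil : Interleave [] [] []
  | left {A B C : List ℤ} (x : ℤ) : Interleave A B C → Interleave (x :: A) B (x :: C)
  | right {A B C : List ℤ} (x : ℤ) : Interleave A B C → Interleave A (x :: B) (x :: C)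

inductive KInterleave : {k : ℕ} → (Fin k → List ℤ) → List ℤ → Prop
  | nil {k : ℕ} : KInterleave (fun _ : Fin k => []) []
  | cons {k : ℕ} (i : Fin k) (x : ℤ) {qs : Fin k → List ℤ} {C : List ℤ} :
      KInterleave qs C → KInterleave (Function.update qs i (x :: qs i)) (x :: C)

noncomputable def Lam (m : ℕ) (X : List ℤ) : ℕ :=
  sInf {r | ∃ (qs : Fin m → List ℤ) (C : List ℤ),
    KInterleave qs X ∧ KInterleave qs C ∧ LDS C = r}


/-!
Take optimal witnesses for `Λ_s(A')` and `Λ_{s'}(A'')` and glue them into one for `A`: the `s`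
parts of `A'` and the `s'` parts of `A''` become `s + s' - 1` parts of `A` by merging the last
part of `A'` with the first part of `A''`, in the order in which their entries occur in `A`.
The two outputs `C'`, `C''` can be shuffled into an output `C` that reads this merged part in
that same order, while every other part of `C` comes from only one side. A decreasing
subsequence of a shuffle splits into decreasing subsequences of `C'` and `C''`, so
`Λ_{s+s'-1}(A) ≤ Λ_s(A') + Λ_{s'}(A'')`; with `s' = k - s + 1` this is the claim.
-/

open Function

inductive Shuffle {α : Type*} : List α → List α → List α → Prop
  | nil : Shuffle [] [] []
  | left {u v w : List α} (x : α) : Shuffle u v w → Shuffle (x :: u) v (x :: w)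
  | right {u v w : List α} (x : α) : Shuffle u v w → Shuffle u (x :: v) (x :: w)

theorem Interleave.shuffle {u v w : List ℤ} (h : Interleave u v w) : Shuffle u v w := by
  induction h with
  | nil => exact .nil
  | left x _ ih => exact .left x ih
  | right x _ ih => exact .right x ih

namespace Shuffle

variable {α β : Type*} {u v w : List α}

theorem nil_left_eq (h : Shuffle [] v w) : w = v := by
  generalize hu : ([] : List α) = u at h
  induction h with
  | nil => rfl
  | left x _ _ => simp at hu
  | right x _ ih => rw [ih hu]

theorem nil_right_eq (h : Shuffle u [] w) : w = u := by
  generalize hv : ([] : List α) = v at h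
  induction h with
  | nil => rfl
  | left x _ ih => rw [ih hv]
  | right x _ _ => simp at hv

theorem nil_left (v : List α) : Shuffle [] v v := by
  induction v with
  | nil => exact .nil
  | cons x v ih => exact .right x ih

theorem append_left (a : List α) (h : Shuffle u v w) : Shuffle (a ++ u) v (a ++ w) := by
  induction a with
  | nil => exact h
  | cons x a ih => exact .left x ih

theorem append_right (a : List α) (h : Shuffle u v w) : Shuffle u (a ++ v) (a ++ w) := by
  induction a with
  | nil => exact h
  | cons x a ih => exact .right x ih

theorem append (u v : List α) : Shuffle u v (u ++ v) := by
  simpa using (nil_left v).append_left u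

theorem map (f : α → β) (h : Shuffle u v w) : Shuffle (u.map f) (v.map f) (w.map f) := by
  induction h with
  | nil => exact .nil
  | left x _ ih => exact .left (f x) ih
  | right x _ ih => exact .right (f x) ih

theorem filter (p : α → Bool) (h : Shuffle u v w) :
    Shuffle (u.filter p) (v.filter p) (w.filter p) := by
  induction h with
  | nil => exact .nil
  | left x _ ih =>
    by_cases hx : p x <;> simp only [List.filter_cons, hx, ↓reduceIte]
    exacts [.left x ih, ih]
  | right x _ ih =>
    by_cases hx : p x <;> simp only [List.filter_cons, hx, ↓reduceIte]
    exacts [.right x ih, ih]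

theorem length_eq (h : Shuffle u v w) : w.length = u.length + v.length := by
  induction h with
  | nil => rfl
  | left x _ ih => simp [ih]; omega
  | right x _ ih => simp [ih]; omega

theorem sublist_left (h : Shuffle u v w) : u.Sublist w := by
  induction h with
  | nil => exact .slnil
  | left x _ ih => exact ih.cons_cons x
  | right x _ ih => exact ih.cons x

theorem sublist_right (h : Shuffle u v w) : v.Sublist w := by
  induction h with
  | nil => exact .slnil
  | left x _ ih => exact ih.cons x
  | right x _ ih => exact ih.cons_cons x

theorem exists_of_sublist {l : List α} (h : Shuffle u v w) (hl : l.Sublist w) :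
    ∃ lu lv, lu.Sublist u ∧ lv.Sublist v ∧ Shuffle lu lv l := by
  induction h generalizing l with
  | nil => exact ⟨[], [], .slnil, .slnil, List.sublist_nil.1 hl ▸ .nil⟩
  | left x _ ih =>
    rcases List.sublist_cons_iff.1 hl with hl | ⟨r, rfl, hr⟩
    · obtain ⟨lu, lv, hu, hv, h⟩ := ih hl
      exact ⟨lu, lv, hu.cons x, hv, h⟩
    · obtain ⟨lu, lv, hu, hv, h⟩ := ih hr
      exact ⟨x :: lu, lv, hu.cons_cons x, hv, .left x h⟩
  | right x _ ih =>
    rcases List.sublist_cons_iff.1 hl with hl | ⟨r, rfl, hr⟩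
    · obtain ⟨lu, lv, hu, hv, h⟩ := ih hl
      exact ⟨lu, lv, hu, hv.cons x, h⟩
    · obtain ⟨lu, lv, hu, hv, h⟩ := ih hr
      exact ⟨lu, x :: lv, hu, hv.cons_cons x, .right x h⟩

theorem exists_of_map {f : α → β} {w : List β} {U V : List α}
    (h : Shuffle (U.map f) (V.map f) w) : ∃ W, Shuffle U V W ∧ W.map f = w := by
  generalize hu : U.map f = u at h
  generalize hv : V.map f = v at h
  induction h generalizing U V with
  | nil =>
    obtain rfl := List.map_eq_nil_iff.1 hu
    obtain rfl := List.map_eq_nil_iff.1 hv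
    exact ⟨[], .nil, rfl⟩
  | left x _ ih =>
    obtain ⟨e, U, rfl, -, hU⟩ := List.map_eq_cons_iff.1 hu
    obtain ⟨W, hW, rfl⟩ := ih hU hv
    exact ⟨e :: W, .left e hW, by simp_all⟩
  | right x _ ih =>
    obtain ⟨e, V, rfl, -, hV⟩ := List.map_eq_cons_iff.1 hv
    obtain ⟨W, hW, rfl⟩ := ih hu hV
    exact ⟨e :: W, .right e hW, by simp_all⟩

theorem exists_of_filter {p : α → Bool} {U V r : List α}
    (h : Shuffle (U.filter p) (V.filter p) r) : ∃ W, Shuffle U V W ∧ W.filter p = r := by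
  generalize hu : U.filter p = u at h
  generalize hv : V.filter p = v at h
  induction h generalizing U V with
  | nil => exact ⟨U ++ V, append U V, by simp [hu, hv]⟩
  | left x _ ih =>
    obtain ⟨U₁, U₂, rfl, hU₁, hx, hU₂⟩ := List.filter_eq_cons_iff.1 hu
    obtain ⟨W, hW, rfl⟩ := ih hU₂ hv
    refine ⟨U₁ ++ x :: W, (Shuffle.left x hW).append_left U₁, ?_⟩
    simp [List.filter_eq_nil_iff.2 hU₁, hx]
  | right x _ ih =>
    obtain ⟨V₁, V₂, rfl, hV₁, hx, hV₂⟩ := List.filter_eq_cons_iff.1 hv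
    obtain ⟨W, hW, rfl⟩ := ih hu hV₂
    refine ⟨V₁ ++ x :: W, (Shuffle.right x hW).append_right V₁, ?_⟩
    simp [List.filter_eq_nil_iff.2 hV₁, hx]

end Shuffle

theorem le_LDS {l a : List ℤ} (hl : l.Sublist a) (hchain : l.IsChain (· > ·)) :
    l.length ≤ LDS a :=
  List.le_max_of_le (List.mem_map_of_mem (List.mem_filter.2 ⟨List.mem_sublists.2 hl,
    decide_eq_true hchain⟩)) le_rfl

theorem LDS_le {a : List ℤ} {n : ℕ}
    (h : ∀ l : List ℤ, l.Sublist a → l.IsChain (· > ·) → l.length ≤ n) : LDS a ≤ n :=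
  List.max_le_of_forall_le _ _ fun _ hx => by
    obtain ⟨l, hl, rfl⟩ := List.mem_map.1 hx
    obtain ⟨hsub, hchain⟩ := List.mem_filter.1 hl
    exact h l (List.mem_sublists.1 hsub) (of_decide_eq_true hchain)

theorem Shuffle.LDS_le_add {u v w : List ℤ} (h : Shuffle u v w) : LDS w ≤ LDS u + LDS v :=
  LDS_le fun l hl hchain => by
    obtain ⟨lu, lv, hu, hv, hl'⟩ := h.exists_of_sublist hl
    have hu' := le_LDS hu (hchain.sublist hl'.sublist_left)
    have hv' := le_LDS hv (hchain.sublist hl'.sublist_right)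
    have := hl'.length_eq
    omega

theorem map_snd_map_prodMap {ι κ α : Type*} (g : κ → ι) (T : List (κ × α)) :
    (T.map (Prod.map g id)).map Prod.snd = T.map Prod.snd := by
  simp [Function.comp_def]

section Parts

variable {ι κ α : Type*} [DecidableEq ι]

/-- A labelled list `T` encodes at once the partition of `T.map Prod.snd` into the parts
`parts T i` and an interleaving of these parts. -/
def parts (T : List (ι × α)) (i : ι) : List α :=
  (T.filter fun e => e.1 = i).map Prod.snd

theorem parts_cons (i : ι) (x : α) (T : List (ι × α)) :
    parts ((i, x) :: T) = update (parts T) i (x :: parts T i) := by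
  funext j
  rcases eq_or_ne j i with rfl | hj
  · simp [parts]
  · simp [parts, hj, Ne.symm hj]

theorem filter_fst_eq (T : List (ι × α)) (i : ι) :
    (T.filter fun e => e.1 = i) = (parts T i).map (Prod.mk i) := by
  induction T with
  | nil => rfl
  | cons e T ih =>
    obtain ⟨j, x⟩ := e
    rcases eq_or_ne j i with rfl | hj
    · simp [parts_cons, ih]
    · simp [parts_cons, hj, update_of_ne (Ne.symm hj), ih]

theorem Shuffle.parts {U V W : List (ι × α)} (h : Shuffle U V W) (i : ι) :
    Shuffle (parts U i) (parts V i) (parts W i) :=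
  (h.filter _).map _

theorem parts_map_of_notMem_range (g : κ → ι) (T : List (κ × α)) {c : ι}
    (hc : c ∉ Set.range g) : parts (T.map (Prod.map g id)) c = [] := by
  simp only [parts, List.map_eq_nil_iff, List.filter_eq_nil_iff, List.mem_map]
  rintro _ ⟨e, -, rfl⟩
  simpa using fun h => hc ⟨e.1, h⟩

theorem parts_map_apply [DecidableEq κ] {g : κ → ι} (hg : Injective g) (T : List (κ × α))
    (i : κ) : parts (T.map (Prod.map g id)) (g i) = parts T i := by
  simp [parts, List.filter_map, Function.comp_def, hg.eq_iff]

theorem parts_map_congr [DecidableEq κ] {g : κ → ι} (hg : Injective g) {T T' : List (κ × α)}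
    (h : parts T = parts T') : parts (T.map (Prod.map g id)) = parts (T'.map (Prod.map g id)) := by
  funext c
  by_cases hc : c ∈ Set.range g
  · obtain ⟨i, rfl⟩ := hc
    rw [parts_map_apply hg, parts_map_apply hg, h]
  · rw [parts_map_of_notMem_range g _ hc, parts_map_of_notMem_range g _ hc]

theorem exists_shuffle_parts_eq {U V U' V' N : List (ι × α)}
    (c₀ : ι) (hU : parts U = parts U') (hV : parts V = parts V')
    (hsep : ∀ c ≠ c₀, parts U c = [] ∨ parts V c = []) (hN : Shuffle U V N) :
    ∃ W, Shuffle U' V' W ∧ parts W = parts N := by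
  have hfilter {T T' : List (ι × α)} (h : parts T = parts T') :
      (T.filter fun e => e.1 = c₀) = T'.filter fun e => e.1 = c₀ := by
    rw [filter_fst_eq, filter_fst_eq, h]
  obtain ⟨W, hW, hWN⟩ := Shuffle.exists_of_filter (p := fun e : ι × α => e.1 = c₀)
    (hfilter hU ▸ hfilter hV ▸ hN.filter _)
  refine ⟨W, hW, funext fun c => ?_⟩
  rcases eq_or_ne c c₀ with rfl | hc
  · simp only [parts, hWN]
  · rcases hsep c hc with h | h
    · have hW' := hW.parts c
      have hN' := hN.parts c
      rw [← hU, h] at hW'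
      rw [h] at hN'
      rw [hW'.nil_left_eq, hN'.nil_left_eq, hV]
    · have hW' := hW.parts c
      have hN' := hN.parts c
      rw [← hV, h] at hW'
      rw [h] at hN'
      rw [hW'.nil_right_eq, hN'.nil_right_eq, hU]

end Parts

theorem kInterleave_iff {k : ℕ} {qs : Fin k → List ℤ} {X : List ℤ} :
    KInterleave qs X ↔ ∃ T : List (Fin k × ℤ), T.map Prod.snd = X ∧ parts T = qs := by
  constructor
  · intro h
    induction h with
    | nil => exact ⟨[], rfl, rfl⟩
    | cons i x _ ih =>
      obtain ⟨T, rfl, rfl⟩ := ih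
      exact ⟨(i, x) :: T, rfl, parts_cons i x T⟩
  · rintro ⟨T, rfl, rfl⟩
    induction T with
    | nil => exact .nil
    | cons e T ih =>
      obtain ⟨i, x⟩ := e
      rw [parts_cons]
      exact ih.cons i x

theorem Lam_le_LDS {m : ℕ} {T W : List (Fin m × ℤ)} (h : parts T = parts W) :
    Lam m (T.map Prod.snd) ≤ LDS (W.map Prod.snd) :=
  Nat.sInf_le ⟨parts T, W.map Prod.snd, kInterleave_iff.2 ⟨T, rfl, rfl⟩,
    kInterleave_iff.2 ⟨W, rfl, h.symm⟩, rfl⟩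

theorem exists_LDS_eq_Lam {m : ℕ} (hm : 0 < m) (X : List ℤ) :
    ∃ T W : List (Fin m × ℤ), T.map Prod.snd = X ∧ parts T = parts W ∧
      LDS (W.map Prod.snd) = Lam m X := by
  have hne : {r | ∃ (qs : Fin m → List ℤ) (C : List ℤ),
      KInterleave qs X ∧ KInterleave qs C ∧ LDS C = r}.Nonempty := by
    refine ⟨LDS X, parts (X.map (⟨0, hm⟩, ·)), X, ?_, ?_, rfl⟩ <;>
      exact kInterleave_iff.2 ⟨_, by simp [Function.comp_def], rfl⟩
  obtain ⟨qs, C, hX, hC, hLDS⟩ := Nat.sInf_mem hne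
  obtain ⟨T, hT, rfl⟩ := kInterleave_iff.1 hX
  obtain ⟨W, rfl, hW⟩ := kInterleave_iff.1 hC
  exact ⟨T, W, hT, hW.symm, hLDS⟩

theorem Interleave.Lam_le_add {A A' A'' : List ℤ} (hsplit : Interleave A' A'' A) {k s s' : ℕ}
    (hs : 0 < s) (hs' : 0 < s') (hk : s + s' = k + 1) : Lam k A ≤ Lam s A' + Lam s' A'' := by
  obtain ⟨T', W', rfl, hT', hW'⟩ := exists_LDS_eq_Lam hs A'
  obtain ⟨T'', W'', rfl, hT'', hW''⟩ := exists_LDS_eq_Lam hs' A''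
  let g' : Fin s → Fin k := Fin.castLE (by omega)
  let g'' : Fin s' → Fin k := fun j => ⟨s - 1 + j, by omega⟩
  let c₀ : Fin k := ⟨s - 1, by omega⟩
  have hg'' : Injective g'' := fun i j h => Fin.ext (by simpa [g''] using h)
  have hsep : ∀ c ≠ c₀, c ∉ Set.range g' ∨ c ∉ Set.range g'' := by
    rintro c hc
    by_contra! ⟨⟨i, rfl⟩, ⟨j, hj⟩⟩
    have := i.2
    exact hc (Fin.ext (by simp [g', g'', c₀, Fin.ext_iff] at hj ⊢; omega))
  obtain ⟨N, hN, hNA⟩ := Shuffle.exists_of_map (U := T'.map (Prod.map g' id))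
    (V := T''.map (Prod.map g'' id))
    (by rw [map_snd_map_prodMap, map_snd_map_prodMap]; exact hsplit.shuffle)
  obtain ⟨W, hW, hWN⟩ := exists_shuffle_parts_eq c₀
    (parts_map_congr (Fin.castLE_injective _) hT') (parts_map_congr hg'' hT'')
    (fun c hc => (hsep c hc).imp
      (parts_map_of_notMem_range _ _) (parts_map_of_notMem_range _ _)) hN
  have hC := hW.map Prod.snd
  rw [map_snd_map_prodMap, map_snd_map_prodMap] at hC
  calc Lam k A = Lam k (N.map Prod.snd) := by rw [hNA]
    _ ≤ LDS (W.map Prod.snd) := Lam_le_LDS hWN.symm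
    _ ≤ LDS (W'.map Prod.snd) + LDS (W''.map Prod.snd) := hC.LDS_le_add
    _ = _ := by rw [hW', hW'']

/-- if `A', A''` is a split of `A`, `Λ_k(A) = L` and `Λ_s(A') = ℓ`
with `s < k`, then `Λ_{k-s+1}(A'') ≥ L - ℓ`. -/
theorem split_lower_bound (A A' A'' : List ℤ) (hsplit : Interleave A' A'' A)
    (k s L ℓ : ℕ) (hs : 0 < s) (hsk : s < k)
    (hA : Lam k A = L) (hA' : Lam s A' = ℓ) :
    L - ℓ ≤ Lam (k - s + 1) A'' := by
  have hk : s + (k - s + 1) = k + 1 := by omega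
  have := hsplit.Lam_le_add hs (by omega) hk
  omega
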